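/- Every committee maximizing the intra-wise PAV score satisfies intra-wise justified representation (IW-JR). That is, in any approval-based sub-committee voting instance, if W is a committee (|W ∩ C_j| = k_j for all j) such that IW-PAV(W) ≥ IW-PAV(W') for every committee W', then W satisfies IW-JR. -/
import Mathlib


open Finset

/-- Span-wise justified representation: every group of voters `X` with
`|X| ≥ n/k` and a commonly approved candidate has some approved candidate in `W`. -/
def SWJR {α : Type*} [DecidableEq α] (n k : ℕ) (A : Fin n → Finset α)
    (W : Finset α) : Prop :=
  ∀ X : Finset (Fin n), (n : ℝ) / (k : ℝ) ≤ (X.card : ℝ) →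
    (∃ c, ∀ i ∈ X, c ∈ A i) → (W ∩ X.biUnion A).Nonempty

/-- Weak span-wise justified representation: every group of voters `X` with
`|X| ≥ n/k` and a commonly approved candidate in *every* candidate subset `Cs j`
has some approved candidate in `W`. -/
def WeakSWJR {α : Type*} [DecidableEq α] (n ℓ k : ℕ) (Cs : Fin ℓ → Finset α)
    (A : Fin n → Finset α) (W : Finset α) : Prop :=
  ∀ X : Finset (Fin n), (n : ℝ) / (k : ℝ) ≤ (X.card : ℝ) →
    (∀ j, ∃ c ∈ Cs j, ∀ i ∈ X, c ∈ A i) → (W ∩ X.biUnion A).Nonempty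

/-- Intra-wise justified representation: for every subset `Cs j` (with quota `q j`),
every group of voters `X` with `|X| ≥ n/(q j)` and a commonly approved candidate in `Cs j`
has some approved candidate in `W ∩ Cs j`. -/
def IWJR {α : Type*} [DecidableEq α] (n ℓ : ℕ) (Cs : Fin ℓ → Finset α)
    (q : Fin ℓ → ℕ) (A : Fin n → Finset α) (W : Finset α) : Prop :=
  ∀ j, ∀ X : Finset (Fin n), (n : ℝ) / (q j : ℝ) ≤ (X.card : ℝ) →
    (∃ c ∈ Cs j, ∀ i ∈ X, c ∈ A i) → ((W ∩ Cs j) ∩ X.biUnion A).Nonempty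

/-- Justified representation in a single-committee approval voting instance
with committee size `κ` and ballots `B`. -/
def JR {α : Type*} [DecidableEq α] (n κ : ℕ) (B : Fin n → Finset α)
    (S : Finset α) : Prop :=
  ∀ X : Finset (Fin n), (n : ℝ) / (κ : ℝ) ≤ (X.card : ℝ) →
    (∃ c, ∀ i ∈ X, c ∈ B i) → (S ∩ X.biUnion B).Nonempty

/-- `harmonicR j = 1 + 1/2 + ⋯ + 1/j`, with `harmonicR 0 = 0`. -/
noncomputable def harmonicR (j : ℕ) : ℝ := ∑ p ∈ Finset.range j, (1 : ℝ) / (p + 1)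

/-- Span-wise PAV score of a committee `W`. -/
noncomputable def SWPAV {α : Type*} [DecidableEq α] (n : ℕ) (A : Fin n → Finset α)
    (W : Finset α) : ℝ :=
  ∑ i, harmonicR ((W ∩ A i).card)

/-- Intra-wise PAV score of a committee `W`. -/
noncomputable def IWPAV {α : Type*} [DecidableEq α] (n ℓ : ℕ) (Cs : Fin ℓ → Finset α)
    (A : Fin n → Finset α) (W : Finset α) : ℝ :=
  ∑ j, ∑ i, harmonicR ((W ∩ A i ∩ Cs j).card)

lemma harmonicR_succ (j : ℕ) : harmonicR (j+1) = harmonicR j + 1/(j+1) := by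
  simp [harmonicR, Finset.sum_range_succ]

lemma harmonicR_mono {a b : ℕ} (h : a ≤ b) : harmonicR a ≤ harmonicR b := by
  apply Finset.sum_le_sum_of_subset_of_nonneg (Finset.range_subset_range.2 h)
  intro i _ _
  positivity

lemma harmonicR_zero : harmonicR 0 = 0 := by simp [harmonicR]

lemma harmonicR_one : harmonicR 1 = 1 := by simp [harmonicR]

/-- every committee maximizing the intra-wise PAV score
among all committees of the instance satisfies IW-JR. -/
theorem stmt_11 {α : Type*} [DecidableEq α] (n ℓ : ℕ) (hn : 0 < n) (hℓ : 0 < ℓ)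
    (Cs : Fin ℓ → Finset α)
    (hdisj : ∀ j1 j2 : Fin ℓ, j1 ≠ j2 → Disjoint (Cs j1) (Cs j2))
    (q : Fin ℓ → ℕ) (hq : ∀ j, 0 < q j) (hqle : ∀ j, q j ≤ (Cs j).card)
    (A : Fin n → Finset α) (hA : ∀ i, A i ⊆ Finset.univ.biUnion Cs)
    (W : Finset α) (hWsub : W ⊆ Finset.univ.biUnion Cs)
    (hWcard : ∀ j, (W ∩ Cs j).card = q j)
    (hmax : ∀ W' : Finset α, W' ⊆ Finset.univ.biUnion Cs →
      (∀ j, (W' ∩ Cs j).card = q j) → IWPAV n ℓ Cs A W' ≤ IWPAV n ℓ Cs A W) :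
    IWJR n ℓ Cs q A W := by
  intro j X hX hc
  obtain ⟨c, hcCs, hcX⟩ := hc
  by_contra hemp
  rw [Finset.not_nonempty_iff_eq_empty] at hemp
  have hqj := hq j
  have hnq : (0:ℝ) < (n:ℝ)/(q j) := by positivity
  have hXposR : (0:ℝ) < (X.card : ℝ) := lt_of_lt_of_le hnq hX
  have hXpos : 0 < X.card := by exact_mod_cast hXposR
  obtain ⟨i0, hi0⟩ := Finset.card_pos.mp hXpos
  have hcW : c ∉ W := by
    intro hcw
    have : c ∈ (W ∩ Cs j) ∩ X.biUnion A := by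
      simp only [Finset.mem_inter, Finset.mem_biUnion]
      exact ⟨⟨hcw, hcCs⟩, i0, hi0, hcX i0 hi0⟩
    rw [hemp] at this
    exact absurd this (Finset.notMem_empty c)
  have hSempty : ∀ i ∈ X, W ∩ A i ∩ Cs j = ∅ := by
    intro i hi
    rw [Finset.eq_empty_iff_forall_notMem]
    intro x hx
    simp only [Finset.mem_inter] at hx
    have : x ∈ (W ∩ Cs j) ∩ X.biUnion A := by
      simp only [Finset.mem_inter, Finset.mem_biUnion]
      exact ⟨⟨hx.1.1, hx.2⟩, i, hi, hx.1.2⟩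
    rw [hemp] at this
    exact absurd this (Finset.notMem_empty x)
  -- the total change caused by swapping w for c
  set D : α → ℝ := fun w => ∑ i, (harmonicR (((insert c (W.erase w)) ∩ A i ∩ Cs j).card)
      - harmonicR ((W ∩ A i ∩ Cs j).card)) with hD
  -- Step A: for voters in X every swap gains exactly 1
  have stepA : ∀ w ∈ W ∩ Cs j, ∀ i ∈ X,
      harmonicR (((insert c (W.erase w)) ∩ A i ∩ Cs j).card)
        - harmonicR ((W ∩ A i ∩ Cs j).card) = 1 := by
    intro w hw i hi
    have hcAi : c ∈ A i := hcX i hi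
    have hset : (insert c (W.erase w)) ∩ A i ∩ Cs j = {c} := by
      rw [Finset.inter_assoc, Finset.insert_inter_of_mem (by
        simp only [Finset.mem_inter]; exact ⟨hcAi, hcCs⟩),
        Finset.erase_inter, ← Finset.inter_assoc, hSempty i hi]
      simp
    rw [hset, hSempty i hi]
    simp [harmonicR_zero, harmonicR_one]
  -- Step B: for any voter, the total loss over all swaps is at least -1
  have stepB : ∀ i : Fin n,
      (-1 : ℝ) ≤ ∑ w ∈ W ∩ Cs j, (harmonicR (((insert c (W.erase w)) ∩ A i ∩ Cs j).card)
        - harmonicR ((W ∩ A i ∩ Cs j).card)) := by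
    intro i
    by_cases hcAi : c ∈ A i
    · -- every term is nonnegative
      have hnn : (0:ℝ) ≤ ∑ w ∈ W ∩ Cs j,
          (harmonicR (((insert c (W.erase w)) ∩ A i ∩ Cs j).card)
          - harmonicR ((W ∩ A i ∩ Cs j).card)) := by
        apply Finset.sum_nonneg
        intro w hw
        have hset : (insert c (W.erase w)) ∩ A i ∩ Cs j
            = insert c ((W ∩ A i ∩ Cs j).erase w) := by
          rw [Finset.inter_assoc, Finset.insert_inter_of_mem (by
            simp only [Finset.mem_inter]; exact ⟨hcAi, hcCs⟩),
            Finset.erase_inter, ← Finset.inter_assoc]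
        have hcne : c ∉ (W ∩ A i ∩ Cs j).erase w := by
          intro h
          exact hcW (Finset.mem_of_mem_inter_left (Finset.mem_of_mem_inter_left
            (Finset.mem_of_mem_erase h)))
        rw [hset, Finset.card_insert_of_notMem hcne]
        have hle : (W ∩ A i ∩ Cs j).card ≤ ((W ∩ A i ∩ Cs j).erase w).card + 1 := by
          by_cases hwS : w ∈ W ∩ A i ∩ Cs j
          · rw [Finset.card_erase_of_mem hwS]
            omega
          · rw [Finset.erase_eq_of_notMem hwS]
            omega
        linarith [harmonicR_mono hle]
      linarith
    · -- c not approved: loss is -1/s per member of S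
      have hset : ∀ w, (insert c (W.erase w)) ∩ A i ∩ Cs j = (W ∩ A i ∩ Cs j).erase w := by
        intro w
        rw [Finset.inter_assoc, Finset.insert_inter_of_notMem (by
          simp only [Finset.mem_inter, not_and]; intro h; exact absurd h hcAi),
          Finset.erase_inter, ← Finset.inter_assoc]
      have hsub : W ∩ A i ∩ Cs j ⊆ W ∩ Cs j := by
        intro x hx
        simp only [Finset.mem_inter] at hx ⊢
        exact ⟨hx.1.1, hx.2⟩
      have heq : ∑ w ∈ W ∩ Cs j, (harmonicR (((insert c (W.erase w)) ∩ A i ∩ Cs j).card)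
            - harmonicR ((W ∩ A i ∩ Cs j).card))
          = ∑ w ∈ W ∩ A i ∩ Cs j, (harmonicR (((W ∩ A i ∩ Cs j).erase w).card)
            - harmonicR ((W ∩ A i ∩ Cs j).card)) := by
        rw [Finset.sum_congr rfl (fun w _ => by rw [hset w])]
        refine (Finset.sum_subset hsub ?_).symm
        intro w _ hwS
        rw [Finset.erase_eq_of_notMem hwS]
        ring
      rw [heq]
      rcases Nat.eq_zero_or_pos (W ∩ A i ∩ Cs j).card with hs0 | hspos
      · rw [Finset.card_eq_zero.mp hs0]
        simp
      · have hterm : ∀ w ∈ W ∩ A i ∩ Cs j,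
            harmonicR (((W ∩ A i ∩ Cs j).erase w).card)
              - harmonicR ((W ∩ A i ∩ Cs j).card)
            = -(1 / ((W ∩ A i ∩ Cs j).card : ℝ)) := by
          intro w hw
          rw [Finset.card_erase_of_mem hw]
          have hsplit : (W ∩ A i ∩ Cs j).card = ((W ∩ A i ∩ Cs j).card - 1) + 1 := by omega
          rw [hsplit, harmonicR_succ]
          have hcast : (((W ∩ A i ∩ Cs j).card - 1 : ℕ) : ℝ) + 1
              = ((((W ∩ A i ∩ Cs j).card - 1) + 1 : ℕ) : ℝ) := by
            push_cast
            ring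
          rw [hcast, ← hsplit]
          ring
        rw [Finset.sum_congr rfl hterm, Finset.sum_const, nsmul_eq_mul]
        have hSne : (((W ∩ A i ∩ Cs j).card : ℕ) : ℝ) ≠ 0 :=
          Nat.cast_ne_zero.mpr hspos.ne'
        rw [mul_neg, mul_one_div, div_self hSne]
  -- Step C: the total change over all swaps is positive
  have hcardWC : (W ∩ Cs j).card = q j := hWcard j
  have hXle : X.card ≤ n := by
    have := Finset.card_le_univ X
    simpa using this
  have hqX : (n : ℝ) ≤ (q j : ℝ) * (X.card : ℝ) := by
    rw [div_le_iff₀ (by exact_mod_cast hqj)] at hX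
    linarith
  have hsumpos : 0 < ∑ w ∈ W ∩ Cs j, D w := by
    have hswap : ∑ w ∈ W ∩ Cs j, D w
        = ∑ i, ∑ w ∈ W ∩ Cs j, (harmonicR (((insert c (W.erase w)) ∩ A i ∩ Cs j).card)
            - harmonicR ((W ∩ A i ∩ Cs j).card)) := by
      simp only [hD]
      exact Finset.sum_comm
    rw [hswap, ← Finset.sum_add_sum_compl X]
    have h1 : ∑ i ∈ X, ∑ w ∈ W ∩ Cs j, (harmonicR (((insert c (W.erase w)) ∩ A i ∩ Cs j).card)
          - harmonicR ((W ∩ A i ∩ Cs j).card)) = (X.card : ℝ) * (q j : ℝ) := by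
      rw [Finset.sum_congr rfl (fun i hi => Finset.sum_congr rfl
        (fun w hw => stepA w hw i hi))]
      simp [hcardWC, mul_comm]
    have h2 : (-1 : ℝ) * ((Xᶜ).card : ℝ) ≤ ∑ i ∈ Xᶜ,
        ∑ w ∈ W ∩ Cs j, (harmonicR (((insert c (W.erase w)) ∩ A i ∩ Cs j).card)
          - harmonicR ((W ∩ A i ∩ Cs j).card)) := by
      calc (-1 : ℝ) * ((Xᶜ).card : ℝ) = ∑ _i ∈ Xᶜ, (-1 : ℝ) := by
            rw [Finset.sum_const, nsmul_eq_mul]; ring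
        _ ≤ _ := Finset.sum_le_sum (fun i _ => stepB i)
    have hXc : ((Xᶜ).card : ℝ) = (n : ℝ) - (X.card : ℝ) := by
      rw [Finset.card_compl]
      simp only [Fintype.card_fin]
      push_cast [Nat.cast_sub hXle]
      ring
    rw [h1]
    have hfin : 0 < (X.card : ℝ) * (q j : ℝ) + (-1) * ((Xᶜ).card : ℝ) := by
      rw [hXc]
      nlinarith
    linarith
  -- pick a good swap
  have hex : ∃ w ∈ W ∩ Cs j, 0 < D w := by
    by_contra hno
    push_neg at hno
    have : ∑ w ∈ W ∩ Cs j, D w ≤ 0 := Finset.sum_nonpos hno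
    linarith
  obtain ⟨w, hw, hDw⟩ := hex
  have hwW : w ∈ W := Finset.mem_of_mem_inter_left hw
  have hwCs : w ∈ Cs j := Finset.mem_of_mem_inter_right hw
  -- W' is a valid committee
  have hW'sub : insert c (W.erase w) ⊆ Finset.univ.biUnion Cs := by
    intro x hx
    rcases Finset.mem_insert.mp hx with rfl | hx
    · exact Finset.mem_biUnion.mpr ⟨j, Finset.mem_univ j, hcCs⟩
    · exact hWsub (Finset.mem_of_mem_erase hx)
  have hW'card : ∀ j', ((insert c (W.erase w)) ∩ Cs j').card = q j' := by
    intro j'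
    by_cases hjj : j' = j
    · subst hjj
      rw [Finset.insert_inter_of_mem hcCs, Finset.erase_inter]
      have hcne : c ∉ (W ∩ Cs j').erase w := by
        intro h
        exact hcW (Finset.mem_of_mem_inter_left (Finset.mem_of_mem_erase h))
      rw [Finset.card_insert_of_notMem hcne, Finset.card_erase_of_mem hw, hWcard j']
      omega
    · have hcnot : c ∉ Cs j' := fun h =>
        (Finset.disjoint_left.mp (hdisj j j' (fun he => hjj he.symm)) hcCs) h
      have hwnot : w ∉ W ∩ Cs j' := by
        simp only [Finset.mem_inter, not_and]
        intro _
        exact fun h => (Finset.disjoint_left.mp (hdisj j j' (fun he => hjj he.symm)) hwCs) h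
      rw [Finset.insert_inter_of_notMem hcnot, Finset.erase_inter,
        Finset.erase_eq_of_notMem hwnot, hWcard j']
  -- IWPAV increases
  have hPAV : IWPAV n ℓ Cs A (insert c (W.erase w)) - IWPAV n ℓ Cs A W = D w := by
    unfold IWPAV
    rw [← Finset.sum_sub_distrib]
    rw [Finset.sum_eq_single_of_mem j (Finset.mem_univ j) ?_]
    · rw [← Finset.sum_sub_distrib]
    · intro j' _ hjj
      have hother : ∀ i, (insert c (W.erase w)) ∩ A i ∩ Cs j' = W ∩ A i ∩ Cs j' := by
        intro i
        have hcnot : c ∉ A i ∩ Cs j' := by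
          simp only [Finset.mem_inter, not_and]
          intro _
          exact fun h => (Finset.disjoint_left.mp (hdisj j j' (fun he => hjj he.symm)) hcCs) h
        have hwnot : w ∉ W ∩ (A i ∩ Cs j') := fun h =>
          (Finset.disjoint_left.mp (hdisj j j' (fun he => hjj he.symm)) hwCs)
            (Finset.mem_of_mem_inter_right (Finset.mem_of_mem_inter_right h))
        rw [Finset.inter_assoc, Finset.insert_inter_of_notMem hcnot,
          Finset.erase_inter, Finset.erase_eq_of_notMem hwnot, ← Finset.inter_assoc]
      rw [Finset.sum_congr rfl (fun i _ => by rw [hother i])]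
      exact sub_self _
  have hle := hmax (insert c (W.erase w)) hW'sub hW'card
  linarith
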